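/- Let γ > 0 and let L(n) : B^γ → X (n ≥ 0) be bounded linear operators defining the system x(n+1) = L(n)x_n + f(n). Then the homogeneous system x(n+1) = L(n)x_n is uniformly stable in B^γ (equivalently, uniformly stable in X with respect to B^γ) if and only if the nonhomogeneous system is (ℓ^1,ℓ^∞)-stable and condition (★) holds. -/

import Mathlib

open scoped ENNReal
open MeasureTheory

namespace BP

variable {X : Type*} [NormedAddCommGroup X] [NormedSpace ℝ X] [CompleteSpace X]

/-- Weighted coordinate size: index `k : ℕ` represents the coordinate `−k ≤ 0`,
so the weight `e^{γ m}` becomes `e^{−γ k}`. -/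
noncomputable def wnorm (γ : ℝ) (φ : ℕ → X) (k : ℕ) : ℝ := ‖φ k‖ * Real.exp (-(γ * k))

/-- Membership in the phase space `B^γ`. -/
def MemB (γ : ℝ) (φ : ℕ → X) : Prop := BddAbove (Set.range (wnorm γ φ))

/-- The `B^γ` norm `|φ|_{B^γ} = sup_{m ≤ 0} ‖φ(m)‖ e^{γ m}`. -/
noncomputable def Bnorm (γ : ℝ) (φ : ℕ → X) : ℝ := ⨆ k, wnorm γ φ k

/-- The history `x_n` of `x : ℤ → X` at time `n` : coordinate `−k` is `x (n − k)`. -/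
def hist (x : ℤ → X) (n : ℤ) : ℕ → X := fun k => x (n - k)

/-- `x = x(·, τ, φ; f)` is the solution of `x(n+1) = L(n) x_n + f(n)` (`n ≥ τ`), `x_τ = φ`. -/
def IsSolution (L : ℕ → ((ℕ → X) →ₗ[ℝ] X)) (f : ℕ → X) (τ : ℕ) (φ : ℕ → X)
    (x : ℤ → X) : Prop :=
  (∀ k : ℕ, x ((τ : ℤ) - k) = φ k) ∧
  (∀ n : ℕ, τ ≤ n → x ((n : ℤ) + 1) = L n (hist x (n : ℤ)) + f n)

/-- Restriction of `x : ℤ → X` to `ℤ≥0`. -/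
def restrict (x : ℤ → X) : ℕ → X := fun n => x (n : ℤ)

/-- The `ℓ^p(ℤ≥0, X)` norm (valued in `ℝ≥0∞`). -/
noncomputable def lpNorm (p : ℝ≥0∞) {E : Type*} [NormedAddCommGroup E] (f : ℕ → E) : ℝ≥0∞ :=
  eLpNorm f p Measure.count

/-- `L(n)` is a bounded operator from `B^γ` to `X`. -/
def OpBounded (γ : ℝ) (T : (ℕ → X) →ₗ[ℝ] X) : Prop :=
  ∃ C : ℝ, ∀ φ : ℕ → X, MemB γ φ → ‖T φ‖ ≤ C * Bnorm γ φ

/-- The projection `P_{[−∞,−j]}` : keeps coordinates `−k` with `k ≥ j`. -/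
def Ptail (j : ℕ) : (ℕ → X) →ₗ[ℝ] (ℕ → X) where
  toFun φ := fun k => if j ≤ k then φ k else 0
  map_add' φ ψ := by funext k; by_cases h : j ≤ k <;> simp [h]
  map_smul' c φ := by funext k; by_cases h : j ≤ k <;> simp [h]

/-- The projection `P_{[−j,0]}` : keeps coordinates `−k` with `k ≤ j`. -/
def Phead (j : ℕ) : (ℕ → X) →ₗ[ℝ] (ℕ → X) where
  toFun φ := fun k => if k ≤ j then φ k else 0
  map_add' φ ψ := by funext k; by_cases h : k ≤ j <;> simp [h]
  map_smul' c φ := by funext k; by_cases h : k ≤ j <;> simp [h]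

/-- `E_{−j} : X → B^γ`, placing `ψ` at coordinate `−j`. -/
def Ecoord (j : ℕ) : X →ₗ[ℝ] (ℕ → X) where
  toFun ψ := fun k => if k = j then ψ else 0
  map_add' ψ χ := by funext k; by_cases h : k = j <;> simp [h]
  map_smul' c ψ := by funext k; by_cases h : k = j <;> simp [h]

/-- The backward shift `S`. -/
def shiftS : (ℕ → X) →ₗ[ℝ] (ℕ → X) where
  toFun φ := fun k => if k = 0 then 0 else φ (k - 1)
  map_add' φ ψ := by funext k; by_cases h : k = 0 <;> simp [h]
  map_smul' c φ := by funext k; by_cases h : k = 0 <;> simp [h]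

/-- `D(n) = E₀ ∘ L(n) + S`. -/
def Dop (L : ℕ → ((ℕ → X) →ₗ[ℝ] X)) (n : ℕ) : (ℕ → X) →ₗ[ℝ] (ℕ → X) :=
  (Ecoord 0).comp (L n) + shiftS

/-- `h = H g`, `h(n) = Σ_{k=0}^{n−1} S^{n−k−1} (I − P₀) g(k)`. -/
noncomputable def Hop (g : ℕ → (ℕ → X)) : ℕ → (ℕ → X) :=
  fun n => ∑ k ∈ Finset.range n,
    ((shiftS ^ (n - k - 1) : (ℕ → X) →ₗ[ℝ] (ℕ → X))
      ((LinearMap.id - Phead 0 : (ℕ → X) →ₗ[ℝ] (ℕ → X)) (g k)))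

/-- `(ℓ^p, ℓ^q)`-stability of the nonhomogeneous system. -/
def lplqStable (L : ℕ → ((ℕ → X) →ₗ[ℝ] X)) (p q : ℝ≥0∞) : Prop :=
  ∀ f : ℕ → X, lpNorm p f < ∞ → ∀ x : ℤ → X, IsSolution L f 0 0 x →
    lpNorm q (restrict x) < ∞

/-- Uniform exponential stability in `X` w.r.t. `B^γ`. -/
def UESinX (γ : ℝ) (L : ℕ → ((ℕ → X) →ₗ[ℝ] X)) : Prop :=
  ∃ K : ℝ, 1 ≤ K ∧ ∃ ν : ℝ, 0 < ν ∧
    ∀ (τ : ℕ) (φ : ℕ → X), MemB γ φ → ∀ x : ℤ → X, IsSolution L 0 τ φ x →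
      ∀ n : ℕ, τ ≤ n → ‖x (n : ℤ)‖ ≤ K * Real.exp (-(ν * ((n : ℝ) - (τ : ℝ)))) * Bnorm γ φ

/-- Uniform exponential stability in `B^γ`. -/
def UESinB (γ : ℝ) (L : ℕ → ((ℕ → X) →ₗ[ℝ] X)) : Prop :=
  ∃ K : ℝ, 1 ≤ K ∧ ∃ ν : ℝ, 0 < ν ∧
    ∀ (τ : ℕ) (φ : ℕ → X), MemB γ φ → ∀ x : ℤ → X, IsSolution L 0 τ φ x →
      ∀ n : ℕ, τ ≤ n →
        Bnorm γ (hist x (n : ℤ)) ≤ K * Real.exp (-(ν * ((n : ℝ) - (τ : ℝ)))) * Bnorm γ φ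

/-- Uniform stability in `X` w.r.t. `B^γ`. -/
def USinX (γ : ℝ) (L : ℕ → ((ℕ → X) →ₗ[ℝ] X)) : Prop :=
  ∃ K : ℝ, 1 ≤ K ∧
    ∀ (τ : ℕ) (φ : ℕ → X), MemB γ φ → ∀ x : ℤ → X, IsSolution L 0 τ φ x →
      ∀ n : ℕ, τ ≤ n → ‖x (n : ℤ)‖ ≤ K * Bnorm γ φ

/-- Uniform stability in `B^γ`. -/
def USinB (γ : ℝ) (L : ℕ → ((ℕ → X) →ₗ[ℝ] X)) : Prop :=
  ∃ K : ℝ, 1 ≤ K ∧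
    ∀ (τ : ℕ) (φ : ℕ → X), MemB γ φ → ∀ x : ℤ → X, IsSolution L 0 τ φ x →
      ∀ n : ℕ, τ ≤ n → Bnorm γ (hist x (n : ℤ)) ≤ K * Bnorm γ φ

/-- Condition (★): there exists `m ≤ 0` (here `m = −j`, `j : ℕ`) such that
`sup_{n ≥ 0} ‖L(n) P_{[−∞,m]}‖_{B^γ→X} < ∞`. -/
def StarCond (γ : ℝ) (L : ℕ → ((ℕ → X) →ₗ[ℝ] X)) : Prop :=
  ∃ (j : ℕ) (C : ℝ), ∀ (n : ℕ) (φ : ℕ → X), MemB γ φ → ‖L n (Ptail j φ)‖ ≤ C * Bnorm γ φ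

/-- `z` solves the first order system `z(n+1) = A(n) z(n)` (`n ≥ τ`), `z(τ) = ψ`. -/
def IsFOSol (A : ℕ → ((ℕ → X) →ₗ[ℝ] (ℕ → X))) (τ : ℕ) (ψ : ℕ → X)
    (z : ℕ → (ℕ → X)) : Prop :=
  z τ = ψ ∧ ∀ n : ℕ, τ ≤ n → z (n + 1) = A n (z n)

/-- Uniform exponential stability of the first order system in `B^γ`. -/
def FOUES (γ : ℝ) (A : ℕ → ((ℕ → X) →ₗ[ℝ] (ℕ → X))) : Prop :=
  ∃ K : ℝ, 1 ≤ K ∧ ∃ ν : ℝ, 0 < ν ∧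
    ∀ (τ : ℕ) (ψ : ℕ → X), MemB γ ψ → ∀ z : ℕ → (ℕ → X), IsFOSol A τ ψ z →
      ∀ n : ℕ, τ ≤ n →
        Bnorm γ (z n) ≤ K * Real.exp (-(ν * ((n : ℝ) - (τ : ℝ)))) * Bnorm γ ψ

/-- Uniform stability of the first order system in `B^γ`. -/
def FOUS (γ : ℝ) (A : ℕ → ((ℕ → X) →ₗ[ℝ] (ℕ → X))) : Prop :=
  ∃ K : ℝ, 1 ≤ K ∧
    ∀ (τ : ℕ) (ψ : ℕ → X), MemB γ ψ → ∀ z : ℕ → (ℕ → X), IsFOSol A τ ψ z →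
      ∀ n : ℕ, τ ≤ n → Bnorm γ (z n) ≤ K * Bnorm γ ψ

/-- The associated subdiagonal system: `L_sub(0) = 0`, `L_sub(n) = L(n) P_{[−n+1,0]}`. -/
def Lsub (L : ℕ → ((ℕ → X) →ₗ[ℝ] X)) : ℕ → ((ℕ → X) →ₗ[ℝ] X) :=
  fun n => if n = 0 then 0 else (L n).comp (Phead (n - 1))

/-- The system has bounded delay of order `d`. -/
def BoundedDelay (L : ℕ → ((ℕ → X) →ₗ[ℝ] X)) (d : ℕ) : Prop :=
  ∀ n : ℕ, ∃ A : Fin d → (X →L[ℝ] X), ∀ φ : ℕ → X, L n φ = ∑ k : Fin d, A k (φ k)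


set_option linter.unusedSectionVars false
set_option maxHeartbeats 1000000

section Aux
variable {γ : ℝ}

lemma wnorm_nonneg (γ : ℝ) (φ : ℕ → X) (k : ℕ) : 0 ≤ wnorm γ φ k :=
  mul_nonneg (norm_nonneg _) (Real.exp_pos _).le

lemma memB_of_le {φ : ℕ → X} {M : ℝ} (h : ∀ k, wnorm γ φ k ≤ M) : MemB γ φ :=
  ⟨M, by rintro _ ⟨k, rfl⟩; exact h k⟩

lemma Bnorm_le {φ : ℕ → X} {M : ℝ} (h : ∀ k, wnorm γ φ k ≤ M) : Bnorm γ φ ≤ M := ciSup_le h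

lemma wnorm_le_Bnorm {φ : ℕ → X} (h : MemB γ φ) (k : ℕ) : wnorm γ φ k ≤ Bnorm γ φ := le_ciSup h k

lemma wnorm_zero_coord (γ : ℝ) (φ : ℕ → X) : wnorm γ φ 0 = ‖φ 0‖ := by simp [wnorm]

lemma norm_le_Bnorm {φ : ℕ → X} (h : MemB γ φ) : ‖φ 0‖ ≤ Bnorm γ φ := by
  simpa [wnorm] using wnorm_le_Bnorm h 0

lemma Bnorm_nonneg {φ : ℕ → X} (h : MemB γ φ) : 0 ≤ Bnorm γ φ :=
  le_trans (wnorm_nonneg γ φ 0) (wnorm_le_Bnorm h 0)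

lemma norm_coord_le_of_wnorm_le {φ : ℕ → X} {c : ℝ} {k : ℕ} (h : wnorm γ φ k ≤ c) :
    ‖φ k‖ ≤ c * Real.exp (γ * k) := by
  rw [wnorm] at h
  calc ‖φ k‖ = ‖φ k‖ * Real.exp (-(γ * k)) * Real.exp (γ * k) := by
        rw [mul_assoc, ← Real.exp_add]; simp
    _ ≤ c * Real.exp (γ * k) := mul_le_mul_of_nonneg_right h (Real.exp_pos _).le

@[simp] lemma Ecoord_apply (j : ℕ) (v : X) (k : ℕ) :
    Ecoord j v k = if k = j then v else 0 := rfl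

@[simp] lemma Ptail_apply (j : ℕ) (φ : ℕ → X) (k : ℕ) :
    Ptail j φ k = if j ≤ k then φ k else 0 := rfl

lemma Ptail_zero (φ : ℕ → X) : Ptail (0 : ℕ) φ = φ := by
  funext k; simp

lemma memB_Ecoord0 (γ : ℝ) (v : X) : MemB γ (Ecoord 0 v) := by
  refine memB_of_le (M := ‖v‖) fun k => ?_
  match k with
  | 0 => simp [wnorm]
  | (s+1) => simp [wnorm, norm_nonneg]

lemma Bnorm_Ecoord0 (γ : ℝ) (v : X) : Bnorm γ (Ecoord 0 v) = ‖v‖ := by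
  refine le_antisymm (Bnorm_le fun k => ?_) ?_
  · match k with
    | 0 => simp [wnorm]
    | (s+1) => simp [wnorm, norm_nonneg]
  · have := norm_le_Bnorm (memB_Ecoord0 γ v)
    simpa using this

lemma hist_zero_coord (x : ℤ → X) (n : ℤ) : hist x n 0 = x n := by
  simp [hist]

lemma hist_succ_succ (x : ℤ → X) (n : ℤ) (s : ℕ) : hist x (n + 1) (s + 1) = hist x n s := by
  show x _ = x _
  congr 1
  push_cast
  ring

section Sol
variable (L : ℕ → ((ℕ → X) →ₗ[ℝ] X)) (f : ℕ → X) (τ : ℕ) (φ : ℕ → X)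

/-- `histSeq L f τ φ t` is the history of the solution at time `τ + t`. -/
def histSeq : ℕ → (ℕ → X)
  | 0 => φ
  | (t+1) => fun k => match k with
    | 0 => L (τ+t) (histSeq t) + f (τ+t)
    | (s+1) => histSeq t s

@[simp] lemma histSeq_zero : histSeq L f τ φ 0 = φ := rfl
@[simp] lemma histSeq_succ_zero (t : ℕ) :
    histSeq L f τ φ (t+1) 0 = L (τ+t) (histSeq L f τ φ t) + f (τ+t) := rfl
@[simp] lemma histSeq_succ_succ (t s : ℕ) :
    histSeq L f τ φ (t+1) (s+1) = histSeq L f τ φ t s := rfl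

/-- The solution. -/
noncomputable def sol : ℤ → X := fun m =>
  if (τ:ℤ) ≤ m then histSeq L f τ φ (m - τ).toNat 0 else φ (τ - m).toNat

lemma sol_init (k : ℕ) : sol L f τ φ ((τ:ℤ) - k) = φ k := by
  rcases Nat.eq_zero_or_pos k with hk | hk
  · subst hk; simp [sol]
  · have h : ¬ ((τ:ℤ) ≤ (τ:ℤ) - k) := by omega
    rw [sol, if_neg h]
    congr 1
    omega

lemma sol_at (t : ℕ) : sol L f τ φ ((τ:ℤ) + t) = histSeq L f τ φ t 0 := by
  rw [sol, if_pos (by omega)]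
  congr 2
  omega

lemma hist_sol (t : ℕ) : hist (sol L f τ φ) ((τ:ℤ) + t) = histSeq L f τ φ t := by
  induction t with
  | zero =>
    funext k
    have : (τ:ℤ) + ((0:ℕ):ℤ) - (k:ℤ) = (τ:ℤ) - k := by push_cast; ring
    rw [hist, this, sol_init]; rfl
  | succ t ih =>
    funext k
    match k with
    | 0 =>
      have : (τ:ℤ) + (t+1 : ℕ) - ((0:ℕ):ℤ) = (τ:ℤ) + (t+1 : ℕ) := by simp
      rw [hist, this, sol_at]
    | (s+1) =>
      have : (τ:ℤ) + (t+1 : ℕ) - ((s+1 : ℕ) : ℕ) = (τ:ℤ) + t - s := by push_cast; ring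
      rw [hist, this]
      have := congrFun ih s
      rw [hist] at this
      rw [this, histSeq_succ_succ]

lemma isSolution_sol : IsSolution L f τ φ (sol L f τ φ) := by
  constructor
  · exact sol_init L f τ φ
  · intro n hn
    obtain ⟨t, rfl⟩ := Nat.exists_eq_add_of_le hn
    have h1 : ((τ + t : ℕ) : ℤ) + 1 = (τ:ℤ) + ((t+1 : ℕ) : ℤ) := by push_cast; ring
    have h2 : ((τ + t : ℕ) : ℤ) = (τ:ℤ) + (t : ℤ) := by push_cast; ring
    rw [h1, sol_at, h2, hist_sol, histSeq_succ_zero]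

lemma solution_hist_eq {x : ℤ → X} (hx : IsSolution L f τ φ x) (t : ℕ) :
    hist x ((τ:ℤ) + t) = histSeq L f τ φ t := by
  induction t with
  | zero =>
    funext k
    have : (τ:ℤ) + ((0:ℕ):ℤ) - (k:ℤ) = (τ:ℤ) - k := by push_cast; ring
    rw [hist, this, hx.1 k]; rfl
  | succ t ih =>
    funext k
    match k with
    | 0 =>
      have h1 : (τ:ℤ) + (t+1 : ℕ) - ((0:ℕ):ℤ) = ((τ + t : ℕ) : ℤ) + 1 := by push_cast; ring
      have h2 : ((τ + t : ℕ) : ℤ) = (τ:ℤ) + (t : ℤ) := by push_cast; ring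
      rw [hist, h1, hx.2 (τ+t) (by omega), h2, ih, histSeq_succ_zero]
    | (s+1) =>
      have : (τ:ℤ) + (t+1 : ℕ) - ((s+1 : ℕ) : ℕ) = (τ:ℤ) + t - s := by push_cast; ring
      rw [hist, this]
      have := congrFun ih s
      rw [hist] at this
      rw [this, histSeq_succ_succ]

lemma solution_eq_histSeq {x : ℤ → X} (hx : IsSolution L f τ φ x) {n : ℕ} (hn : τ ≤ n) :
    x (n : ℤ) = histSeq L f τ φ (n - τ) 0 := by
  have h := congrFun (solution_hist_eq L f τ φ hx (n - τ)) 0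
  rw [hist] at h
  have : (τ:ℤ) + ((n - τ : ℕ) : ℤ) - ((0:ℕ):ℤ) = (n:ℤ) := by omega
  rwa [this] at h

lemma hist_init {x : ℤ → X} (hx : IsSolution L f τ φ x) : hist x (τ:ℤ) = φ :=
  funext fun k => hx.1 k

lemma histSeq_congr {g : ℕ → X} (t : ℕ) (h : ∀ i < τ + t, f i = g i) :
    histSeq L f τ φ t = histSeq L g τ φ t := by
  induction t with
  | zero => rfl
  | succ t ih =>
    funext k
    have hih := ih (fun i hi => h i (by omega))
    match k with
    | 0 => rw [histSeq_succ_zero, histSeq_succ_zero, hih, h (τ+t) (by omega)]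
    | (s+1) => rw [histSeq_succ_succ, histSeq_succ_succ, hih]

lemma histSeq_add (g : ℕ → X) (ψ : ℕ → X) (t : ℕ) :
    histSeq L (f + g) τ (φ + ψ) t = histSeq L f τ φ t + histSeq L g τ ψ t := by
  induction t with
  | zero => rfl
  | succ t ih =>
    funext k
    match k with
    | 0 =>
      simp only [histSeq_succ_zero, ih, map_add, Pi.add_apply]
      abel
    | (s+1) => simp [ih]

lemma histSeq_smul (c : ℝ) (t : ℕ) :
    histSeq L (c • f) τ (c • φ) t = c • histSeq L f τ φ t := by
  induction t with
  | zero => rfl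
  | succ t ih =>
    funext k
    match k with
    | 0 =>
      simp only [histSeq_succ_zero, ih, LinearMap.map_smul, Pi.smul_apply, smul_add]
    | (s+1) => simp [ih]

lemma sol_nonpos {z : ℤ} (hz : z ≤ 0) : sol L f 0 (0 : ℕ → X) z = 0 := by
  rcases eq_or_lt_of_le hz with h | h
  · subst h
    have := sol_at L f 0 (0 : ℕ → X) 0
    simpa using this
  · rw [sol, if_neg (by omega)]; rfl

end Sol

/-- One step preservation of `MemB` for histories. -/
lemma memB_hist_step (hγ : 0 ≤ γ) {x : ℤ → X} {n : ℤ} (h : MemB γ (hist x n)) :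
    MemB γ (hist x (n+1)) ∧
      Bnorm γ (hist x (n+1)) ≤ max ‖x (n+1)‖ (Bnorm γ (hist x n)) := by
  have key : ∀ k, wnorm γ (hist x (n+1)) k ≤ max ‖x (n+1)‖ (Bnorm γ (hist x n)) := by
    intro k
    match k with
    | 0 =>
      rw [wnorm_zero_coord, hist_zero_coord]
      exact le_max_left _ _
    | (s+1) =>
      calc wnorm γ (hist x (n+1)) (s+1) = ‖hist x n s‖ * Real.exp (-(γ*((s:ℝ)+1))) := by
            rw [wnorm, hist_succ_succ]; push_cast; ring_nf
        _ ≤ ‖hist x n s‖ * Real.exp (-(γ*(s:ℝ))) := by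
            refine mul_le_mul_of_nonneg_left (Real.exp_le_exp.2 (by nlinarith)) (norm_nonneg _)
        _ = wnorm γ (hist x n) s := rfl
        _ ≤ Bnorm γ (hist x n) := wnorm_le_Bnorm h s
        _ ≤ _ := le_max_right _ _
  exact ⟨memB_of_le key, Bnorm_le key⟩

lemma memB_hist_all (hγ : 0 ≤ γ) {L : ℕ → ((ℕ → X) →ₗ[ℝ] X)} {f : ℕ → X} {τ : ℕ}
    {φ : ℕ → X} {x : ℤ → X} (hφ : MemB γ φ) (hx : IsSolution L f τ φ x)
    {n : ℕ} (hn : τ ≤ n) : MemB γ (hist x (n:ℤ)) := by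
  obtain ⟨t, rfl⟩ := Nat.exists_eq_add_of_le hn
  clear hn
  induction t with
  | zero => rw [Nat.add_zero, hist_init L f τ φ hx]; exact hφ
  | succ t ih =>
    have hc : ((τ + (t+1) : ℕ) : ℤ) = ((τ + t : ℕ) : ℤ) + 1 := by push_cast; ring
    rw [hc]
    exact (memB_hist_step hγ ih).1

end Aux


section Main
variable {γ : ℝ} {L : ℕ → ((ℕ → X) →ₗ[ℝ] X)}

lemma usinB_iff_usinX (hγ : 0 < γ) : USinB γ L ↔ USinX γ L := by
  constructor
  · rintro ⟨K, hK1, hK⟩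
    refine ⟨K, hK1, fun τ φ hφ x hx n hn => ?_⟩
    have hmem : MemB γ (hist x (n:ℤ)) := memB_hist_all hγ.le hφ hx hn
    calc ‖x (n:ℤ)‖ = ‖hist x (n:ℤ) 0‖ := by rw [hist_zero_coord]
      _ ≤ Bnorm γ (hist x (n:ℤ)) := norm_le_Bnorm hmem
      _ ≤ K * Bnorm γ φ := hK τ φ hφ x hx n hn
  · rintro ⟨K, hK1, hK⟩
    refine ⟨K, hK1, fun τ φ hφ x hx n hn => ?_⟩
    have hBφ : 0 ≤ Bnorm γ φ := Bnorm_nonneg hφ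
    refine Bnorm_le fun k => ?_
    by_cases hk : τ + k ≤ n
    · have hm : τ ≤ n - k := by omega
      have hcast : (n:ℤ) - (k:ℤ) = ((n - k : ℕ) : ℤ) := by omega
      have hx1 : ‖x ((n:ℤ) - k)‖ ≤ K * Bnorm γ φ := by
        rw [hcast]; exact hK τ φ hφ x hx (n-k) hm
      calc wnorm γ (hist x (n:ℤ)) k = ‖x ((n:ℤ) - k)‖ * Real.exp (-(γ*k)) := rfl
        _ ≤ (K * Bnorm γ φ) * 1 := by
            refine mul_le_mul hx1 ?_ (Real.exp_pos _).le (by positivity)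
            rw [Real.exp_le_one_iff]
            have : (0:ℝ) ≤ (k:ℝ) := Nat.cast_nonneg _
            nlinarith
        _ = K * Bnorm γ φ := mul_one _
    · set k' := k - (n - τ) with hk'
      have hcast : (τ:ℤ) - (k' : ℤ) = (n:ℤ) - k := by
        simp only [hk']
        push_cast [Nat.cast_sub (by omega : n - τ ≤ k), Nat.cast_sub (by omega : τ ≤ n)]
        ring
      have hxv : x ((n:ℤ) - k) = φ k' := by rw [← hcast]; exact hx.1 k'
      have hkk' : (k' : ℝ) ≤ (k : ℝ) := by
        have : k' ≤ k := by omega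
        exact_mod_cast this
      calc wnorm γ (hist x (n:ℤ)) k = ‖φ k'‖ * Real.exp (-(γ*k)) := by rw [wnorm, hist, hxv]
        _ ≤ ‖φ k'‖ * Real.exp (-(γ*k')) := by
            refine mul_le_mul_of_nonneg_left (Real.exp_le_exp.2 (by nlinarith)) (norm_nonneg _)
        _ = wnorm γ φ k' := rfl
        _ ≤ Bnorm γ φ := wnorm_le_Bnorm hφ k'
        _ ≤ K * Bnorm γ φ := le_mul_of_one_le_left hBφ hK1

lemma usinX_imp_star (hUS : USinX γ L) : StarCond γ L := by
  obtain ⟨K, _, hK⟩ := hUS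
  refine ⟨0, K, fun n φ hφ => ?_⟩
  rw [Ptail_zero]
  have hsol := isSolution_sol L (0 : ℕ → X) n φ
  have hrec := hsol.2 n le_rfl
  have hhist : hist (sol L (0 : ℕ → X) n φ) (n:ℤ) = φ := hist_init L (0 : ℕ → X) n φ hsol
  have hb : ‖sol L (0 : ℕ → X) n φ ((n:ℤ)+1)‖ ≤ K * Bnorm γ φ := by
    have hcast : ((n+1 : ℕ):ℤ) = (n:ℤ)+1 := by push_cast; ring
    have := hK n φ hφ _ hsol (n+1) (by omega)
    rwa [hcast] at this
  rw [hrec, hhist] at hb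
  simpa using hb

lemma count_ae_all {p : ℕ → Prop} (h : ∀ᵐ n ∂(Measure.count : Measure ℕ), p n) :
    ∀ n, p n := by
  intro n
  by_contra hn
  rw [MeasureTheory.ae_iff] at h
  have hempty : {a : ℕ | ¬ p a} = ∅ := Measure.count_eq_zero_iff.1 h
  exact absurd hempty (Set.nonempty_iff_ne_empty.1 ⟨n, hn⟩)

lemma lpNorm_one_lt_top {f : ℕ → X} : lpNorm 1 f < ⊤ ↔ Summable fun i => ‖f i‖ := by
  rw [lpNorm, eLpNorm_one_eq_lintegral_enorm, lintegral_count]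
  simp_rw [enorm_eq_nnnorm]
  rw [lt_top_iff_ne_top,
    ENNReal.tsum_coe_ne_top_iff_summable]
  constructor
  · intro h
    have := NNReal.summable_coe.2 h
    simpa [coe_nnnorm] using this
  · intro h
    rw [← NNReal.summable_coe]
    simpa [coe_nnnorm] using h

lemma lpNorm_top_lt_top {x : ℕ → X} (C : ℝ) (h : ∀ n, ‖x n‖ ≤ C) : lpNorm ⊤ x < ⊤ := by
  have hb := eLpNorm_le_of_ae_bound (μ := (Measure.count : Measure ℕ)) (p := (⊤ : ℝ≥0∞))
    (f := x) (ae_of_all _ h)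
  have heq : Measure.count (Set.univ : Set ℕ) ^ (⊤:ℝ≥0∞).toReal⁻¹ * ENNReal.ofReal C
      = ENNReal.ofReal C := by simp
  exact lt_of_le_of_lt (hb.trans (le_of_eq heq)) ENNReal.ofReal_lt_top

lemma bounded_of_lpNorm_top {x : ℕ → X} (h : lpNorm ⊤ x < ⊤) : ∃ C : ℝ, ∀ n, ‖x n‖ ≤ C := by
  rw [lpNorm, eLpNorm_exponent_top] at h
  refine ⟨(eLpNormEssSup x Measure.count).toReal, ?_⟩
  have hae := ENNReal.ae_le_essSup (μ := (Measure.count : Measure ℕ))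
    (f := fun n : ℕ => (‖x n‖₊ : ℝ≥0∞))
  have hall := count_ae_all hae
  intro n
  rw [eLpNormEssSup]
  have h1 : (‖x n‖₊ : ℝ≥0∞) ≤ eLpNormEssSup x Measure.count := hall n
  have h2 : ((‖x n‖₊ : ℝ≥0∞)).toReal ≤ (eLpNormEssSup x Measure.count).toReal :=
    ENNReal.toReal_mono h.ne h1
  simpa [coe_nnnorm] using h2

lemma superposition (L : ℕ → ((ℕ → X) →ₗ[ℝ] X)) (f : ℕ → X) {x : ℤ → X}
    (hx : IsSolution L f 0 0 x) (t : ℕ) :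
    hist x (t:ℤ) =
      ∑ k ∈ Finset.range t, hist (sol L 0 (k+1) (Ecoord 0 (f k))) (t:ℤ) := by
  induction t with
  | zero =>
    funext s
    rw [Finset.range_zero, Finset.sum_empty]
    have := hx.1 s
    simpa [hist] using this
  | succ t ih =>
    funext s
    rw [Finset.sum_apply]
    have e1 : ((t+1:ℕ):ℤ) = ((t:ℕ):ℤ)+1 := by push_cast; ring
    match s with
    | 0 =>
      have lhs : hist x ((t+1:ℕ):ℤ) 0 = L t (hist x (t:ℤ)) + f t := by
        rw [hist_zero_coord, e1, hx.2 t (Nat.zero_le t)]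
      have hyk : ∀ k < t, hist (sol L (0:ℕ→X) (k+1) (Ecoord 0 (f k))) ((t+1:ℕ):ℤ) 0 = L t (hist (sol L (0:ℕ→X) (k+1) (Ecoord 0 (f k))) (t:ℤ)) := by
        intro k hk
        rw [hist_zero_coord, e1, (isSolution_sol L (0:ℕ→X) (k+1) _).2 t hk]
        simp
      have hyt : hist (sol L (0:ℕ→X) (t+1) (Ecoord 0 (f t))) ((t+1:ℕ):ℤ) 0 = f t := by
        rw [hist_zero_coord]
        have h0 := sol_init L (0:ℕ→X) (t+1) (Ecoord 0 (f t)) 0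
        rw [Nat.cast_zero, sub_zero] at h0
        rw [h0]
        simp
      rw [lhs, Finset.sum_range_succ, hyt, ih, map_sum]
      congr 1
      exact Finset.sum_congr rfl fun k hk => (hyk k (Finset.mem_range.1 hk)).symm
    | (s+1) =>
      have hss : ∀ (z : ℤ → X), hist z ((t+1:ℕ):ℤ) (s+1) = hist z (t:ℤ) s := by
        intro z
        rw [e1, hist_succ_succ]
      rw [hss x, ih, Finset.sum_apply, Finset.sum_range_succ]
      have hyt : hist (sol L (0:ℕ→X) (t+1) (Ecoord 0 (f t))) ((t+1:ℕ):ℤ) (s+1) = 0 := by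
        show sol L (0:ℕ→X) (t+1) (Ecoord 0 (f t)) (((t+1:ℕ):ℤ) - ((s+1:ℕ):ℤ)) = 0
        have h0 := sol_init L (0:ℕ→X) (t+1) (Ecoord 0 (f t)) (s+1)
        rw [h0]
        simp
      rw [hyt, add_zero]
      exact Finset.sum_congr rfl fun k _ => (hss (sol L (0:ℕ→X) (k+1) (Ecoord 0 (f k)))).symm

lemma usinX_imp_l1linf (hUS : USinX γ L) : lplqStable L 1 ⊤ := by
  obtain ⟨K, hK1, hK⟩ := hUS
  intro f hf x hx
  have hsum : Summable fun i => ‖f i‖ := lpNorm_one_lt_top.1 hf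
  set F := ∑' i, ‖f i‖ with hF
  have hb : ∀ t : ℕ, ‖x (t:ℤ)‖ ≤ K * F := by
    intro t
    have h1 : x (t:ℤ) = ∑ k ∈ Finset.range t, (sol L 0 (k+1) (Ecoord 0 (f k))) (t:ℤ) := by
      have h2 := congrFun (superposition L f hx t) 0
      rw [hist_zero_coord, Finset.sum_apply] at h2
      rw [h2]
      exact Finset.sum_congr rfl fun k _ => hist_zero_coord _ _
    rw [h1]
    calc ‖∑ k ∈ Finset.range t, (sol L 0 (k+1) (Ecoord 0 (f k))) (t:ℤ)‖
        ≤ ∑ k ∈ Finset.range t, ‖(sol L 0 (k+1) (Ecoord 0 (f k))) (t:ℤ)‖ :=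
          norm_sum_le _ _
      _ ≤ ∑ k ∈ Finset.range t, K * ‖f k‖ := by
          refine Finset.sum_le_sum fun k hk => ?_
          have hkt : k + 1 ≤ t := Finset.mem_range.1 hk
          have := hK (k+1) (Ecoord 0 (f k)) (memB_Ecoord0 γ (f k)) _
            (isSolution_sol L 0 (k+1) (Ecoord 0 (f k))) t hkt
          rwa [Bnorm_Ecoord0] at this
      _ = K * ∑ k ∈ Finset.range t, ‖f k‖ := by rw [Finset.mul_sum]
      _ ≤ K * F := by
          refine mul_le_mul_of_nonneg_left ?_ (by linarith)
          exact Summable.sum_le_tsum _ (fun _ _ => norm_nonneg _) hsum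
  exact lpNorm_top_lt_top (K * F) fun n => hb n

end Main


section UBP
variable {γ : ℝ} {L : ℕ → ((ℕ → X) →ₗ[ℝ] X)}

lemma wnorm_succ_le {γ : ℝ} (hγ : 0 ≤ γ) {φ ψ : ℕ → X} {s : ℕ} (h : φ (s+1) = ψ s) :
    wnorm γ φ (s+1) ≤ wnorm γ ψ s := by
  rw [wnorm, wnorm, h]
  refine mul_le_mul_of_nonneg_left (Real.exp_le_exp.2 ?_) (norm_nonneg _)
  push_cast
  nlinarith

lemma histSeq_memB_bound (hγ : 0 < γ) (hL : ∀ n, OpBounded γ (L n)) :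
    ∀ t : ℕ, ∃ M : ℝ, 0 ≤ M ∧ ∀ g : ℕ → X,
      MemB γ (histSeq L g 0 0 t) ∧
      Bnorm γ (histSeq L g 0 0 t) ≤ M * ∑ i ∈ Finset.range t, ‖g i‖ := by
  choose C0 hC0 using hL
  intro t
  induction t with
  | zero =>
    refine ⟨0, le_refl 0, fun g => ?_⟩
    refine ⟨memB_of_le (M := 0) fun k => by simp [wnorm], ?_⟩
    rw [Finset.range_zero, Finset.sum_empty, mul_zero]
    exact Bnorm_le fun k => by simp [wnorm]
  | succ t ih =>
    obtain ⟨M, hM0, hM⟩ := ih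
    set Ct := max (C0 t) 0 with hCt
    have hCt0 : 0 ≤ Ct := le_max_right _ _
    refine ⟨max M (Ct * M + 1), le_trans hM0 (le_max_left _ _), fun g => ?_⟩
    obtain ⟨hmem, hbd⟩ := hM g
    have hBnn : 0 ≤ Bnorm γ (histSeq L g 0 0 t) := Bnorm_nonneg hmem
    have hsum0 : (0:ℝ) ≤ ∑ i ∈ Finset.range t, ‖g i‖ :=
      Finset.sum_nonneg fun _ _ => norm_nonneg _
    have hsums : ∑ i ∈ Finset.range (t+1), ‖g i‖
        = (∑ i ∈ Finset.range t, ‖g i‖) + ‖g t‖ := Finset.sum_range_succ _ _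
    have hsum1 : ∑ i ∈ Finset.range t, ‖g i‖ ≤ ∑ i ∈ Finset.range (t+1), ‖g i‖ := by
      rw [hsums]; nlinarith [norm_nonneg (g t)]
    have hsum2 : (0:ℝ) ≤ ∑ i ∈ Finset.range (t+1), ‖g i‖ := le_trans hsum0 hsum1
    have key : ∀ k, wnorm γ (histSeq L g 0 0 (t+1)) k
        ≤ (max M (Ct*M+1)) * ∑ i ∈ Finset.range (t+1), ‖g i‖ := by
      intro k
      match k with
      | 0 =>
        rw [wnorm_zero_coord, histSeq_succ_zero, zero_add]
        calc ‖L t (histSeq L g 0 0 t) + g t‖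
            ≤ ‖L t (histSeq L g 0 0 t)‖ + ‖g t‖ := norm_add_le _ _
          _ ≤ Ct * Bnorm γ (histSeq L g 0 0 t) + ‖g t‖ := by
              have h1 := hC0 t (histSeq L g 0 0 t) hmem
              have h2 : C0 t * Bnorm γ (histSeq L g 0 0 t) ≤ Ct * Bnorm γ (histSeq L g 0 0 t) :=
                mul_le_mul_of_nonneg_right (le_max_left _ _) hBnn
              linarith
          _ ≤ Ct * (M * ∑ i ∈ Finset.range t, ‖g i‖) + ‖g t‖ := by
              have := mul_le_mul_of_nonneg_left hbd hCt0
              linarith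
          _ ≤ (Ct*M+1) * ∑ i ∈ Finset.range (t+1), ‖g i‖ := by
              rw [hsums]
              nlinarith [norm_nonneg (g t), mul_nonneg hCt0 hM0]
          _ ≤ (max M (Ct*M+1)) * ∑ i ∈ Finset.range (t+1), ‖g i‖ :=
              mul_le_mul_of_nonneg_right (le_max_right _ _) hsum2
      | (s+1) =>
        calc wnorm γ (histSeq L g 0 0 (t+1)) (s+1)
            ≤ wnorm γ (histSeq L g 0 0 t) s := wnorm_succ_le hγ.le (histSeq_succ_succ L g 0 0 t s)
          _ ≤ Bnorm γ (histSeq L g 0 0 t) := wnorm_le_Bnorm hmem s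
          _ ≤ M * ∑ i ∈ Finset.range t, ‖g i‖ := hbd
          _ ≤ M * ∑ i ∈ Finset.range (t+1), ‖g i‖ := mul_le_mul_of_nonneg_left hsum1 hM0
          _ ≤ (max M (Ct*M+1)) * ∑ i ∈ Finset.range (t+1), ‖g i‖ :=
              mul_le_mul_of_nonneg_right (le_max_left _ _) hsum2
    exact ⟨memB_of_le key, Bnorm_le key⟩

lemma ubp_bound (hγ : 0 < γ) (hL : ∀ n, OpBounded γ (L n)) (hst : lplqStable L 1 ⊤) :
    ∃ M : ℝ, 0 ≤ M ∧ ∀ (g : ℕ → X) (n : ℕ),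
      ‖histSeq L g 0 0 n 0‖ ≤ M * ∑ i ∈ Finset.range n, ‖g i‖ := by
  haveI : Fact ((1:ℝ≥0∞) ≤ 1) := ⟨le_refl _⟩
  choose Mf hMf using histSeq_memB_bound hγ hL
  have coordbd : ∀ (n:ℕ) (g : ℕ → X),
      ‖histSeq L g 0 0 n 0‖ ≤ Mf n * ∑ i ∈ Finset.range n, ‖g i‖ := by
    intro n g
    obtain ⟨hmem, hbd⟩ := (hMf n).2 g
    calc ‖histSeq L g 0 0 n 0‖ = wnorm γ (histSeq L g 0 0 n) 0 := (wnorm_zero_coord _ _).symm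
      _ ≤ Bnorm γ (histSeq L g 0 0 n) := wnorm_le_Bnorm hmem 0
      _ ≤ _ := hbd
  have hadd : ∀ (n : ℕ) (g h : ℕ → X),
      histSeq L (g + h) 0 0 n = histSeq L g 0 0 n + histSeq L h 0 0 n := by
    intro n g h
    have := histSeq_add L g 0 0 h 0 n
    simpa using this
  have hsmul : ∀ (n : ℕ) (c : ℝ) (g : ℕ → X),
      histSeq L (c • g) 0 0 n = c • histSeq L g 0 0 n := by
    intro n c g
    have := histSeq_smul L g 0 0 c n
    simpa using this
  set T : ℕ → (lp (fun _ : ℕ => X) 1) →L[ℝ] X := fun n =>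
    LinearMap.mkContinuous
      { toFun := fun g => histSeq L (⇑g) 0 0 n 0
        map_add' := fun g h => by
          show histSeq L (⇑(g+h)) 0 0 n 0 = histSeq L (⇑g) 0 0 n 0 + histSeq L (⇑h) 0 0 n 0
          rw [lp.coeFn_add, hadd n (⇑g) (⇑h)]; rfl
        map_smul' := fun c g => by
          show histSeq L (⇑(c • g)) 0 0 n 0 = c • histSeq L (⇑g) 0 0 n 0
          rw [lp.coeFn_smul, hsmul n c (⇑g)]; rfl }
      (Mf n)
      (fun g => by
        refine (coordbd n (⇑g)).trans ?_
        refine mul_le_mul_of_nonneg_left ?_ (hMf n).1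
        have hs := lp.hasSum_norm (by norm_num : 0 < (1:ℝ≥0∞).toReal) g
        simp only [ENNReal.toReal_one, Real.rpow_one] at hs
        exact sum_le_hasSum _ (fun _ _ => norm_nonneg _) hs)
    with hT
  have hpt : ∀ g : lp (fun _ : ℕ => X) 1, ∃ c, ∀ n, ‖T n g‖ ≤ c := by
    intro g
    have hsumm : Summable fun i => ‖g i‖ := by
      have h2 := lp.memℓp g
      rw [memℓp_gen_iff (by norm_num : 0 < (1:ℝ≥0∞).toReal)] at h2
      simpa using h2
    have hf1 : lpNorm 1 (⇑g) < ⊤ := lpNorm_one_lt_top.2 hsumm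
    have hxsol := isSolution_sol L (⇑g) 0 (0:ℕ→X)
    have hbdd := hst (⇑g) hf1 _ hxsol
    obtain ⟨c, hc⟩ := bounded_of_lpNorm_top hbdd
    refine ⟨c, fun n => ?_⟩
    have heq : restrict (sol L (⇑g) 0 0) n = histSeq L (⇑g) 0 0 n 0 := by
      have h3 := solution_eq_histSeq L (⇑g) 0 0 hxsol (Nat.zero_le n)
      simpa [restrict] using h3
    have h4 := hc n
    rw [heq] at h4
    exact h4
  obtain ⟨M', hM'⟩ := banach_steinhaus hpt
  refine ⟨max M' 0, le_max_right _ _, fun g n => ?_⟩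
  set g' : ℕ → X := fun i => if i < n then g i else 0 with hg'
  have hsum' : Summable fun i => ‖g' i‖ := by
    refine summable_of_ne_finset_zero (s := Finset.range n) fun i hi => ?_
    have : ¬ i < n := by simpa using hi
    simp [hg', this]
  have hmem : Memℓp g' 1 := by
    apply memℓp_gen
    simpa [ENNReal.toReal_one] using hsum'
  set gE : lp (fun _ : ℕ => X) 1 := ⟨g', hmem⟩ with hgE
  have hcoe : ⇑gE = g' := rfl
  have hnorm : ‖gE‖ = ∑ i ∈ Finset.range n, ‖g' i‖ := by
    have hs := lp.hasSum_norm (by norm_num : 0 < (1:ℝ≥0∞).toReal) gE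
    simp only [ENNReal.toReal_one, Real.rpow_one, hcoe] at hs
    have hs2 : HasSum (fun i => ‖g' i‖) (∑ i ∈ Finset.range n, ‖g' i‖) := by
      refine hasSum_sum_of_ne_finset_zero fun i hi => ?_
      have : ¬ i < n := by simpa using hi
      simp [hg', this]
    exact hs.unique hs2
  have hTg : T n gE = histSeq L g 0 0 n 0 := by
    show histSeq L (⇑gE) 0 0 n 0 = _
    rw [hcoe]
    have := histSeq_congr L g' 0 (0:ℕ→X) (g := g) n (fun i hi => by
      have : i < n := by omega
      simp [hg', this])
    rw [this]
  have hle := (T n).le_opNorm gE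
  rw [hTg, hnorm] at hle
  have hgg : ∑ i ∈ Finset.range n, ‖g' i‖ = ∑ i ∈ Finset.range n, ‖g i‖ :=
    Finset.sum_congr rfl fun i hi => by simp [hg', Finset.mem_range.1 hi]
  rw [hgg] at hle
  have hsumnn : (0:ℝ) ≤ ∑ i ∈ Finset.range n, ‖g i‖ :=
    Finset.sum_nonneg fun _ _ => norm_nonneg _
  calc ‖histSeq L g 0 0 n 0‖ ≤ ‖T n‖ * ∑ i ∈ Finset.range n, ‖g i‖ := hle
    _ ≤ max M' 0 * ∑ i ∈ Finset.range n, ‖g i‖ :=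
        mul_le_mul_of_nonneg_right (le_trans (hM' n) (le_max_left _ _)) hsumnn

end UBP


section EcoordBound
variable {γ : ℝ} {L : ℕ → ((ℕ → X) →ₗ[ℝ] X)}

lemma Ecoord_bound {M : ℝ} (hM0 : 0 ≤ M)
    (hM : ∀ (g : ℕ → X) (n : ℕ), ‖histSeq L g 0 0 n 0‖ ≤ M * ∑ i ∈ Finset.range n, ‖g i‖) :
    ∀ (k : ℕ), ∀ (n : ℕ) (v : X), k + 1 ≤ n → ‖L n (Ecoord k v)‖ ≤ M * (1+M)^k * ‖v‖ := by
  have h1M : (0:ℝ) ≤ 1 + M := by linarith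
  intro k
  induction k using Nat.strong_induction_on with
  | _ k ih =>
  intro n v hkn
  set p := n - k with hp
  have hp1 : 1 ≤ p := by omega
  have hpn : p ≤ n := by omega
  have hnp : n - p = k := by omega
  set f : ℕ → X := fun i =>
    if i + 1 = p then v else if p ≤ i ∧ i < n then -(L i (Ecoord (i - p) v)) else 0 with hf
  set x := sol L f 0 (0:ℕ→X) with hx
  have hsol : IsSolution L f 0 (0:ℕ→X) x := isSolution_sol L f 0 (0:ℕ→X)
  have histfact : ∀ m : ℕ, (∀ m' : ℕ, m' ≤ m → x (m':ℤ) = Ecoord p v m') →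
      hist x (m:ℤ) = (if p ≤ m then Ecoord (m-p) v else (0:ℕ→X)) := by
    intro m hval
    funext s
    by_cases hs : s ≤ m
    · have hcast : (m:ℤ) - (s:ℤ) = ((m - s : ℕ):ℤ) := by omega
      have hv : hist x (m:ℤ) s = x ((m - s:ℕ):ℤ) := by rw [hist, hcast]
      rw [hv, hval (m - s) (by omega)]
      by_cases hpm : p ≤ m
      · rw [if_pos hpm]
        by_cases he : m - s = p
        · rw [Ecoord_apply, Ecoord_apply, if_pos he, if_pos (by omega)]
        · rw [Ecoord_apply, Ecoord_apply, if_neg he, if_neg (by omega)]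
      · rw [if_neg hpm, Ecoord_apply, if_neg (by omega)]
        rfl
    · have hneg : (m:ℤ) - s ≤ 0 := by omega
      have hz : hist x (m:ℤ) s = 0 := by
        rw [hist, hx]
        exact sol_nonpos L f hneg
      rw [hz]
      by_cases hpm : p ≤ m
      · rw [if_pos hpm, Ecoord_apply, if_neg (by omega)]
      · rw [if_neg hpm]; rfl
  have claimA : ∀ m : ℕ, m ≤ n → ∀ m' : ℕ, m' ≤ m → x (m':ℤ) = Ecoord p v m' := by
    intro m
    induction m with
    | zero =>
      intro _ m' hm'
      have hm0 : m' = 0 := by omega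
      subst hm0
      have h0 : x ((0:ℕ):ℤ) = 0 := by
        rw [hx]; exact sol_nonpos L f (by simp)
      rw [h0, Ecoord_apply, if_neg (by omega)]
    | succ m ihm =>
      intro hm1 m' hm'
      by_cases hm'' : m' ≤ m
      · exact ihm (by omega) m' hm''
      have hmeq : m' = m + 1 := by omega
      subst hmeq
      have hrec := hsol.2 m (Nat.zero_le m)
      have hcast : ((m+1:ℕ):ℤ) = (m:ℤ)+1 := by push_cast; ring
      have hh := histfact m (ihm (by omega))
      rw [hcast, hrec, hh]
      by_cases h1 : m + 1 = p
      · have hpm : ¬ p ≤ m := by omega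
        have hfm : f m = v := by simp [hf, h1]
        rw [if_neg hpm, map_zero, zero_add, hfm, Ecoord_apply, if_pos h1]
      · by_cases h2 : p ≤ m
        · have hm1n : m < n := by omega
          have hfm : f m = -(L m (Ecoord (m - p) v)) := by
            have h3 : ¬ (m + 1 = p) := h1
            simp [hf, h3, h2, hm1n]
          rw [if_pos h2, hfm, Ecoord_apply, if_neg (by omega)]
          abel
        · have hfm : f m = 0 := by
            have h3 : ¬ (m + 1 = p) := h1
            have h4 : ¬ (p ≤ m ∧ m < n) := by omega
            simp [hf, h3, h4]
          rw [if_neg h2, hfm, map_zero, zero_add, Ecoord_apply, if_neg h1]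
  have hhn : hist x (n:ℤ) = Ecoord k v := by
    rw [histfact n (claimA n le_rfl), if_pos hpn, hnp]
  have hfn : f n = 0 := by
    have h3 : ¬ (n + 1 = p) := by omega
    have h4 : ¬ (p ≤ n ∧ n < n) := by omega
    simp [hf, h3, h4]
  have hxn1 : x ((n+1:ℕ):ℤ) = L n (Ecoord k v) := by
    have hcast : ((n+1:ℕ):ℤ) = (n:ℤ)+1 := by push_cast; ring
    rw [hcast, hsol.2 n (Nat.zero_le n), hhn, hfn, add_zero]
  have hxh : x ((n+1:ℕ):ℤ) = histSeq L f 0 (0:ℕ→X) (n+1) 0 := by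
    have := solution_eq_histSeq L f 0 (0:ℕ→X) hsol (Nat.zero_le (n+1))
    simpa using this
  have hb := hM f (n+1)
  rw [← hxh, hxn1] at hb
  have hsum : ∑ i ∈ Finset.range (n+1), ‖f i‖ ≤ (1+M)^k * ‖v‖ := by
    have hterm : ∀ i ∈ Finset.range (n+1), ‖f i‖ ≤
        (if i = p - 1 then ‖v‖ else 0) +
        (if p ≤ i ∧ i < n then M*(1+M)^(i-p)*‖v‖ else 0) := by
      intro i _
      by_cases h1 : i + 1 = p
      · have hfi : f i = v := by simp [hf, h1]
        rw [hfi, if_pos (by omega)]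
        have hnn : (0:ℝ) ≤ if p ≤ i ∧ i < n then M*(1+M)^(i-p)*‖v‖ else 0 := by
          split_ifs
          · positivity
          · exact le_refl 0
        linarith
      · by_cases h2 : p ≤ i ∧ i < n
        · have hfi : f i = -(L i (Ecoord (i-p) v)) := by
            simp [hf, h1, h2.1, h2.2]
          rw [hfi, norm_neg, if_neg (by omega), if_pos h2, zero_add]
          exact ih (i-p) (by omega) i v (by omega)
        · have hfi : f i = 0 := by simp [hf, h1, h2]
          rw [hfi, norm_zero, if_neg (by omega : ¬ i = p - 1), if_neg h2, add_zero]
    have hS1 : ∑ i ∈ Finset.range (n+1), (if i = p - 1 then ‖v‖ else 0) = ‖v‖ := by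
      rw [Finset.sum_ite_eq' (Finset.range (n+1)) (p-1) (fun _ => ‖v‖)]
      rw [if_pos (Finset.mem_range.2 (by omega))]
    have hS2 : ∑ i ∈ Finset.range (n+1), (if p ≤ i ∧ i < n then M*(1+M)^(i-p)*‖v‖ else 0)
        = ((1+M)^k - 1) * ‖v‖ := by
      classical
      rw [← Finset.sum_filter]
      have hfil : (Finset.range (n+1)).filter (fun i => p ≤ i ∧ i < n) = Finset.Ico p n := by
        ext i
        simp only [Finset.mem_filter, Finset.mem_range, Finset.mem_Ico]
        omega
      rw [hfil, Finset.sum_Ico_eq_sum_range]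
      have hsimp : ∀ i : ℕ, p + i - p = i := fun i => by omega
      rw [Finset.sum_congr rfl (fun i _ => by rw [hsimp i]), hnp]
      have hgeom := geom_sum_mul (1+M) k
      have : (1+M) - 1 = M := by ring
      rw [this] at hgeom
      calc ∑ i ∈ Finset.range k, M*(1+M)^i*‖v‖
          = ((∑ i ∈ Finset.range k, (1+M)^i) * M) * ‖v‖ := by
            rw [Finset.sum_mul, Finset.sum_mul]
            exact Finset.sum_congr rfl fun i _ => by ring
        _ = ((1+M)^k - 1) * ‖v‖ := by rw [hgeom]
    calc ∑ i ∈ Finset.range (n+1), ‖f i‖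
        ≤ ∑ i ∈ Finset.range (n+1), ((if i = p - 1 then ‖v‖ else 0) +
          (if p ≤ i ∧ i < n then M*(1+M)^(i-p)*‖v‖ else 0)) := Finset.sum_le_sum hterm
      _ = ‖v‖ + ((1+M)^k - 1) * ‖v‖ := by rw [Finset.sum_add_distrib, hS1, hS2]
      _ = (1+M)^k * ‖v‖ := by ring
  calc ‖L n (Ecoord k v)‖ ≤ M * ∑ i ∈ Finset.range (n+1), ‖f i‖ := hb
    _ ≤ M * ((1+M)^k * ‖v‖) := mul_le_mul_of_nonneg_left hsum hM0
    _ = M * (1+M)^k * ‖v‖ := by ring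

end EcoordBound


section Sufficiency
variable {γ : ℝ} {L : ℕ → ((ℕ → X) →ₗ[ℝ] X)}

lemma hist_bound_head (hγ : 0 < γ) (C : ℕ → ℝ) (hC0' : ∀ n, 0 ≤ C n)
    (hCb : ∀ n φ, MemB γ φ → ‖L n φ‖ ≤ C n * Bnorm γ φ)
    {τ : ℕ} {φ : ℕ → X} {x : ℤ → X} (hφ : MemB γ φ) (hx : IsSolution L 0 τ φ x)
    (j : ℕ) (D : ℝ) (hD : 0 ≤ D) (hjD : ∀ n < j, C n ≤ D) :
    ∀ t : ℕ, τ + t ≤ j → MemB γ (hist x ((τ+t:ℕ):ℤ)) ∧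
      Bnorm γ (hist x ((τ+t:ℕ):ℤ)) ≤ (1+D)^t * Bnorm γ φ := by
  have h1D : (0:ℝ) ≤ 1 + D := by linarith
  have hBφ : 0 ≤ Bnorm γ φ := Bnorm_nonneg hφ
  intro t
  induction t with
  | zero =>
    intro _
    rw [Nat.add_zero, hist_init L 0 τ φ hx, pow_zero, one_mul]
    exact ⟨hφ, le_refl _⟩
  | succ t ih =>
    intro h
    obtain ⟨hmem, hbd⟩ := ih (by omega)
    have hbn : 0 ≤ Bnorm γ (hist x ((τ+t:ℕ):ℤ)) := Bnorm_nonneg hmem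
    have hxb : ‖x (((τ+t:ℕ):ℤ) + 1)‖ ≤ D * ((1+D)^t * Bnorm γ φ) := by
      rw [hx.2 (τ+t) (by omega)]
      have h0 : (0:ℕ→X) (τ+t) = 0 := rfl
      rw [h0, add_zero]
      calc ‖L (τ+t) (hist x ((τ+t:ℕ):ℤ))‖
          ≤ C (τ+t) * Bnorm γ (hist x ((τ+t:ℕ):ℤ)) := hCb (τ+t) _ hmem
        _ ≤ D * Bnorm γ (hist x ((τ+t:ℕ):ℤ)) :=
            mul_le_mul_of_nonneg_right (hjD (τ+t) (by omega)) hbn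
        _ ≤ D * ((1+D)^t * Bnorm γ φ) := mul_le_mul_of_nonneg_left hbd hD
    have hstep := memB_hist_step hγ.le hmem
    have hcast : ((τ+(t+1):ℕ):ℤ) = ((τ+t:ℕ):ℤ) + 1 := by push_cast; ring
    rw [hcast]
    refine ⟨hstep.1, hstep.2.trans (max_le ?_ ?_)⟩
    · refine hxb.trans ?_
      have hps : (1+D)^(t+1) = (1+D)^t * (1+D) := pow_succ _ _
      nlinarith [mul_nonneg (pow_nonneg h1D t) hBφ]
    · refine hbd.trans ?_
      have hps : (1+D)^(t+1) = (1+D)^t * (1+D) := pow_succ _ _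
      nlinarith [mul_nonneg (pow_nonneg h1D t) hBφ]

lemma sufficiency (hγ : 0 < γ) (hL : ∀ n, OpBounded γ (L n)) (h1 : lplqStable L 1 ⊤)
    (hstar : StarCond γ L) : USinX γ L := by
  obtain ⟨M, hM0, hM⟩ := ubp_bound hγ hL h1
  obtain ⟨j, Cs0, hstar0⟩ := hstar
  set Cs := max Cs0 0 with hCsdef
  have hCs0 : 0 ≤ Cs := le_max_right _ _
  have hstar' : ∀ (n : ℕ) (φ : ℕ → X), MemB γ φ → ‖L n (Ptail j φ)‖ ≤ Cs * Bnorm γ φ :=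
    fun n φ hφ => (hstar0 n φ hφ).trans
      (mul_le_mul_of_nonneg_right (le_max_left _ _) (Bnorm_nonneg hφ))
  choose C0 hC0 using hL
  set C : ℕ → ℝ := fun n => max (C0 n) 0 with hCdef
  have hC0' : ∀ n, 0 ≤ C n := fun n => le_max_right _ _
  have hCb : ∀ n φ, MemB γ φ → ‖L n φ‖ ≤ C n * Bnorm γ φ := fun n φ hφ =>
    (hC0 n φ hφ).trans (mul_le_mul_of_nonneg_right (le_max_left _ _) (Bnorm_nonneg hφ))
  set D := ∑ i ∈ Finset.range j, C i with hDdef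
  have hD0 : 0 ≤ D := Finset.sum_nonneg fun i _ => hC0' i
  have hjD : ∀ n < j, C n ≤ D := fun n hn =>
    Finset.single_le_sum (fun i _ => hC0' i) (Finset.mem_range.2 hn)
  have h1D : (0:ℝ) ≤ 1 + D := by linarith
  have hβ0 : ∀ k : ℕ, (0:ℝ) ≤ M * (1+M)^k :=
    fun k => mul_nonneg hM0 (pow_nonneg (by linarith) k)
  have hβb := Ecoord_bound hM0 hM
  set r := Real.exp (-γ) with hrdef
  have hr0 : 0 ≤ r := (Real.exp_pos _).le
  have hr1 : r < 1 := by rw [hrdef]; rw [Real.exp_lt_one_iff]; linarith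
  set A := Cs + (∑ k ∈ Finset.range j, M * (1+M)^k) * Real.exp (γ * j) with hAdef
  have hA0 : 0 ≤ A :=
    add_nonneg hCs0 (mul_nonneg (Finset.sum_nonneg fun k _ => hβ0 k) (Real.exp_pos _).le)
  set S := (j:ℝ) * A + Cs * (1 - r)⁻¹ with hSdef
  have hS0 : 0 ≤ S := add_nonneg (mul_nonneg (Nat.cast_nonneg _) hA0)
    (mul_nonneg hCs0 (inv_nonneg.2 (by linarith)))
  set K2 := max 1 (M * S) with hK2def
  have hK2_1 : (1:ℝ) ≤ K2 := le_max_left _ _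
  have hK2_0 : (0:ℝ) ≤ K2 := by linarith
  have hDj1 : (1:ℝ) ≤ (1+D)^j := one_le_pow₀ (by linarith)
  refine ⟨K2 * (1+D)^j, by nlinarith, fun τ φ hφ x hx n hn => ?_⟩
  have hBφ : 0 ≤ Bnorm γ φ := Bnorm_nonneg hφ
  have phase1 := hist_bound_head hγ C hC0' hCb hφ hx j D hD0 hjD
  set σ := max τ j with hσdef
  have hτσ : τ ≤ σ := le_max_left _ _
  have hjσ : j ≤ σ := le_max_right _ _
  have hψ : MemB γ (hist x (σ:ℤ)) ∧ Bnorm γ (hist x (σ:ℤ)) ≤ (1+D)^j * Bnorm γ φ := by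
    by_cases hcase : j ≤ τ
    · have hστ : σ = τ := by omega
      rw [hστ, hist_init L 0 τ φ hx]
      exact ⟨hφ, by nlinarith⟩
    · have hστ : σ = τ + (j - τ) := by omega
      have hres := phase1 (j - τ) (by omega)
      rw [← hστ] at hres
      refine ⟨hres.1, hres.2.trans ?_⟩
      exact mul_le_mul_of_nonneg_right (pow_le_pow_right₀ (by linarith) (by omega)) hBφ
  obtain ⟨hψmem, hψbd⟩ := hψ
  have hBψ0 : 0 ≤ Bnorm γ (hist x (σ:ℤ)) := Bnorm_nonneg hψmem
  by_cases hnj : n < j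
  · have hres := phase1 (n - τ) (by omega)
    have hnτ : τ + (n - τ) = n := by omega
    rw [hnτ] at hres
    have hxn : ‖x (n:ℤ)‖ ≤ (1+D)^j * Bnorm γ φ := by
      calc ‖x (n:ℤ)‖ = ‖hist x (n:ℤ) 0‖ := by rw [hist_zero_coord]
        _ ≤ Bnorm γ (hist x (n:ℤ)) := norm_le_Bnorm hres.1
        _ ≤ (1+D)^(n-τ) * Bnorm γ φ := hres.2
        _ ≤ (1+D)^j * Bnorm γ φ :=
            mul_le_mul_of_nonneg_right (pow_le_pow_right₀ (by linarith) (by omega)) hBφ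
    refine hxn.trans ?_
    nlinarith [mul_nonneg (pow_nonneg h1D j) hBφ]
  · have hσn : σ ≤ n := by omega
    rcases eq_or_lt_of_le hσn with heq | hlt
    · have hxn : ‖x (n:ℤ)‖ ≤ (1+D)^j * Bnorm γ φ := by
        calc ‖x (n:ℤ)‖ = ‖hist x (n:ℤ) 0‖ := by rw [hist_zero_coord]
          _ ≤ Bnorm γ (hist x (n:ℤ)) := by rw [← heq]; exact norm_le_Bnorm hψmem
          _ ≤ (1+D)^j * Bnorm γ φ := by rw [← heq]; exact hψbd
      refine hxn.trans ?_
      nlinarith [mul_nonneg (pow_nonneg h1D j) hBφ]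
    · -- main case : σ < n
      set w : ℤ → X := fun m => if (σ:ℤ) < m then x m else 0 with hwdef
      set g : ℕ → X := fun i => w ((i:ℤ)+1) - L i (hist w (i:ℤ)) with hgdef
      have hwsol : IsSolution L g 0 (0:ℕ→X) w := by
        constructor
        · intro k
          show (if (σ:ℤ) < ((0:ℕ):ℤ) - (k:ℤ) then x _ else 0) = (0:ℕ→X) k
          rw [if_neg (by omega)]
          rfl
        · intro m _
          show w ((m:ℤ)+1) = L m (hist w (m:ℤ)) + (w ((m:ℤ)+1) - L m (hist w (m:ℤ)))
          abel
      have hxw : x (n:ℤ) = histSeq L g 0 (0:ℕ→X) n 0 := by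
        have h2 : w (n:ℤ) = x (n:ℤ) := by
          show (if (σ:ℤ) < (n:ℤ) then x (n:ℤ) else 0) = x (n:ℤ)
          rw [if_pos (by exact_mod_cast hlt)]
        have h3 := solution_eq_histSeq L g 0 (0:ℕ→X) hwsol (Nat.zero_le n)
        rw [← h2]
        simpa using h3
      have hg0 : ∀ i : ℕ, i < σ → g i = 0 := by
        intro i hi
        have hw1 : w ((i:ℤ)+1) = 0 := by
          show (if (σ:ℤ) < (i:ℤ)+1 then x ((i:ℤ)+1) else 0) = 0
          rw [if_neg (by omega)]
        have hw2 : hist w (i:ℤ) = 0 := by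
          funext s
          show (if (σ:ℤ) < (i:ℤ) - (s:ℤ) then x _ else 0) = (0:ℕ→X) s
          rw [if_neg (by omega)]
          rfl
        show w ((i:ℤ)+1) - L i (hist w (i:ℤ)) = 0
        rw [hw1, hw2, map_zero, sub_zero]
      have hgbd : ∀ i : ℕ, σ ≤ i → ‖g i‖ ≤
          Bnorm γ (hist x (σ:ℤ)) * (if i < σ + j then A else Cs * r^(i-σ)) := by
        intro i hi
        set δ : ℕ → X := hist x (i:ℤ) - hist w (i:ℤ) with hδdef
        have hδval : ∀ s : ℕ, δ s =
            if i - σ ≤ s then hist x (σ:ℤ) (s - (i - σ)) else 0 := by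
          intro s
          by_cases hs : i - σ ≤ s
          · rw [if_pos hs]
            have hws : w ((i:ℤ) - (s:ℤ)) = 0 := by
              show (if (σ:ℤ) < (i:ℤ) - (s:ℤ) then x _ else 0) = 0
              rw [if_neg (by omega)]
            have hxs : x ((i:ℤ) - (s:ℤ)) = hist x (σ:ℤ) (s - (i-σ)) := by
              show x _ = x ((σ:ℤ) - ((s - (i-σ) : ℕ):ℤ))
              congr 1
              omega
            show x ((i:ℤ) - (s:ℤ)) - w ((i:ℤ) - (s:ℤ)) = _
            rw [hws, hxs, sub_zero]
          · rw [if_neg hs]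
            have hlt2 : (σ:ℤ) < (i:ℤ) - (s:ℤ) := by omega
            show x ((i:ℤ) - (s:ℤ)) - w ((i:ℤ) - (s:ℤ)) = 0
            have : w ((i:ℤ) - (s:ℤ)) = x ((i:ℤ) - (s:ℤ)) := by
              show (if (σ:ℤ) < (i:ℤ) - (s:ℤ) then x _ else 0) = _
              rw [if_pos hlt2]
            rw [this, sub_self]
        have hδw : ∀ s, wnorm γ δ s ≤ r^(i-σ) * Bnorm γ (hist x (σ:ℤ)) := by
          intro s
          by_cases hs : i - σ ≤ s
          · have hv := hδval s
            rw [if_pos hs] at hv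
            set s' := s - (i - σ) with hs'def
            have hss : s = s' + (i - σ) := by omega
            have hscast : (s:ℝ) = (s':ℝ) + ((i-σ:ℕ):ℝ) := by exact_mod_cast congrArg (Nat.cast : ℕ → ℝ) hss
            have hexp : Real.exp (-(γ * (s:ℝ))) = Real.exp (-(γ * (s':ℝ))) * r^(i-σ) := by
              rw [hrdef, ← Real.exp_nat_mul, ← Real.exp_add]
              congr 1
              rw [hscast]
              ring
            calc wnorm γ δ s = ‖hist x (σ:ℤ) s'‖ * Real.exp (-(γ * (s:ℝ))) := by
                  rw [wnorm, hv]
              _ = (‖hist x (σ:ℤ) s'‖ * Real.exp (-(γ * (s':ℝ)))) * r^(i-σ) := by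
                  rw [hexp]; ring
              _ = wnorm γ (hist x (σ:ℤ)) s' * r^(i-σ) := rfl
              _ ≤ Bnorm γ (hist x (σ:ℤ)) * r^(i-σ) :=
                  mul_le_mul_of_nonneg_right (wnorm_le_Bnorm hψmem s') (pow_nonneg hr0 _)
              _ = r^(i-σ) * Bnorm γ (hist x (σ:ℤ)) := mul_comm _ _
          · have hv := hδval s
            rw [if_neg hs] at hv
            rw [wnorm, hv, norm_zero, zero_mul]
            exact mul_nonneg (pow_nonneg hr0 _) hBψ0
        have hδmem : MemB γ δ := memB_of_le hδw
        have hδB : Bnorm γ δ ≤ r^(i-σ) * Bnorm γ (hist x (σ:ℤ)) := Bnorm_le hδw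
        have hrq1 : r^(i-σ) ≤ 1 := pow_le_one₀ hr0 hr1.le
        have hBδψ : Bnorm γ δ ≤ Bnorm γ (hist x (σ:ℤ)) := hδB.trans (by nlinarith)
        have hgδ : g i = L i δ := by
          have hwi1 : w ((i:ℤ)+1) = x ((i:ℤ)+1) := by
            show (if (σ:ℤ) < (i:ℤ)+1 then x _ else 0) = _
            rw [if_pos (by omega)]
          have hxi1 : x ((i:ℤ)+1) = L i (hist x (i:ℤ)) := by
            rw [hx.2 i (le_trans hτσ hi)]
            have hz : (0:ℕ→X) i = 0 := rfl
            rw [hz, add_zero]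
          show w ((i:ℤ)+1) - L i (hist w (i:ℤ)) = L i δ
          rw [hwi1, hxi1, hδdef, map_sub]
        by_cases hij : i < σ + j
        · rw [if_pos hij]
          have hdec : δ = Ptail j δ + ∑ k ∈ Finset.range j, Ecoord k (δ k) := by
            funext s
            rw [Pi.add_apply, Finset.sum_apply, Ptail_apply]
            have hsum : ∑ k ∈ Finset.range j, Ecoord k (δ k) s
                = if s ∈ Finset.range j then δ s else 0 := by
              rw [Finset.sum_congr rfl (fun k _ => Ecoord_apply k (δ k) s)]
              exact Finset.sum_ite_eq (Finset.range j) s (fun k => δ k)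
            by_cases hs : j ≤ s
            · rw [if_pos hs, hsum, if_neg (by simp only [Finset.mem_range]; omega), add_zero]
            · rw [if_neg hs, hsum, if_pos (by simp only [Finset.mem_range]; omega), zero_add]
          have hnorm1 : ‖L i (Ptail j δ)‖ ≤ Cs * Bnorm γ δ := hstar' i δ hδmem
          have hnorm2 : ∀ k ∈ Finset.range j, ‖L i (Ecoord k (δ k))‖
              ≤ (M * (1+M)^k) * (Bnorm γ (hist x (σ:ℤ)) * Real.exp (γ * j)) := by
            intro k hk
            have hk' : k < j := Finset.mem_range.1 hk
            have hki : k + 1 ≤ i := by omega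
            have hwk : wnorm γ δ k ≤ Bnorm γ (hist x (σ:ℤ)) := (hδw k).trans (by nlinarith)
            have hδk : ‖δ k‖ ≤ Bnorm γ (hist x (σ:ℤ)) * Real.exp (γ * k) :=
              norm_coord_le_of_wnorm_le hwk
            have hδk2 : ‖δ k‖ ≤ Bnorm γ (hist x (σ:ℤ)) * Real.exp (γ * j) := by
              refine hδk.trans (mul_le_mul_of_nonneg_left (Real.exp_le_exp.2 ?_) hBψ0)
              have : (k:ℝ) ≤ (j:ℝ) := by exact_mod_cast hk'.le
              nlinarith
            calc ‖L i (Ecoord k (δ k))‖ ≤ M * (1+M)^k * ‖δ k‖ := hβb k i (δ k) hki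
              _ ≤ (M * (1+M)^k) * (Bnorm γ (hist x (σ:ℤ)) * Real.exp (γ * j)) :=
                  mul_le_mul_of_nonneg_left hδk2 (hβ0 k)
          calc ‖g i‖ = ‖L i δ‖ := by rw [hgδ]
            _ = ‖L i (Ptail j δ) + ∑ k ∈ Finset.range j, L i (Ecoord k (δ k))‖ := by
                rw [← map_sum, ← map_add, ← hdec]
            _ ≤ ‖L i (Ptail j δ)‖ + ‖∑ k ∈ Finset.range j, L i (Ecoord k (δ k))‖ :=
                norm_add_le _ _
            _ ≤ Cs * Bnorm γ δ + ∑ k ∈ Finset.range j, ‖L i (Ecoord k (δ k))‖ :=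
                add_le_add hnorm1 (norm_sum_le _ _)
            _ ≤ Cs * Bnorm γ (hist x (σ:ℤ))
                + ∑ k ∈ Finset.range j, (M * (1+M)^k) * (Bnorm γ (hist x (σ:ℤ)) * Real.exp (γ * j)) :=
                add_le_add (mul_le_mul_of_nonneg_left hBδψ hCs0) (Finset.sum_le_sum hnorm2)
            _ = Bnorm γ (hist x (σ:ℤ)) * A := by
                rw [hAdef, ← Finset.sum_mul]
                ring
        · rw [if_neg hij]
          have hPt : Ptail j δ = δ := by
            funext s
            rw [Ptail_apply]
            by_cases hs : j ≤ s
            · rw [if_pos hs]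
            · rw [if_neg hs, hδval s, if_neg (by omega)]
          calc ‖g i‖ = ‖L i (Ptail j δ)‖ := by rw [hgδ, hPt]
            _ ≤ Cs * Bnorm γ δ := hstar' i δ hδmem
            _ ≤ Cs * (r^(i-σ) * Bnorm γ (hist x (σ:ℤ))) := mul_le_mul_of_nonneg_left hδB hCs0
            _ = Bnorm γ (hist x (σ:ℤ)) * (Cs * r^(i-σ)) := by ring
      -- total sum estimate
      have hMbd : ‖x (n:ℤ)‖ ≤ M * ∑ i ∈ Finset.range n, ‖g i‖ := by
        rw [hxw]; exact hM g n
      have hgle : ∀ i ∈ Finset.range n, ‖g i‖ ≤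
          (if σ ≤ i ∧ i < σ + j then Bnorm γ (hist x (σ:ℤ)) * A else 0)
          + (if σ + j ≤ i then Bnorm γ (hist x (σ:ℤ)) * (Cs * r^(i-σ)) else 0) := by
        intro i _
        by_cases h1 : i < σ
        · rw [hg0 i h1, norm_zero, if_neg (by omega), if_neg (by omega), add_zero]
        · have h2 : σ ≤ i := by omega
          have hb := hgbd i h2
          by_cases h3 : i < σ + j
          · rw [if_pos ⟨h2, h3⟩, if_neg (by omega), add_zero]
            rw [if_pos h3] at hb
            exact hb
          · rw [if_neg (by omega), if_pos (by omega), zero_add]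
            rw [if_neg h3] at hb
            exact hb
      have hBA0 : 0 ≤ Bnorm γ (hist x (σ:ℤ)) * A := mul_nonneg hBψ0 hA0
      have hsum1 : ∑ i ∈ Finset.range n, (if σ ≤ i ∧ i < σ + j then Bnorm γ (hist x (σ:ℤ)) * A else 0)
          ≤ (j:ℝ) * (Bnorm γ (hist x (σ:ℤ)) * A) := by
        classical
        rw [← Finset.sum_filter]
        have hsub : (Finset.range n).filter (fun i => σ ≤ i ∧ i < σ + j) ⊆ Finset.Ico σ (σ+j) := by
          intro i hi
          simp only [Finset.mem_filter, Finset.mem_range] at hi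
          simp only [Finset.mem_Ico]
          omega
        calc ∑ _i ∈ (Finset.range n).filter (fun i => σ ≤ i ∧ i < σ + j), Bnorm γ (hist x (σ:ℤ)) * A
            = ((Finset.range n).filter (fun i => σ ≤ i ∧ i < σ + j)).card
              * (Bnorm γ (hist x (σ:ℤ)) * A) := by
              rw [Finset.sum_const, nsmul_eq_mul]
          _ ≤ (j:ℝ) * (Bnorm γ (hist x (σ:ℤ)) * A) := by
              refine mul_le_mul_of_nonneg_right ?_ hBA0
              have hcard : ((Finset.range n).filter (fun i => σ ≤ i ∧ i < σ + j)).card ≤ j := by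
                have := Finset.card_le_card hsub
                rwa [Nat.card_Ico, Nat.add_sub_cancel_left] at this
              exact_mod_cast hcard
      have hsum2 : ∑ i ∈ Finset.range n, (if σ + j ≤ i then Bnorm γ (hist x (σ:ℤ)) * (Cs * r^(i-σ)) else 0)
          ≤ Bnorm γ (hist x (σ:ℤ)) * Cs * (1-r)⁻¹ := by
        classical
        have hle2 : ∀ i ∈ Finset.range n,
            (if σ + j ≤ i then Bnorm γ (hist x (σ:ℤ)) * (Cs * r^(i-σ)) else 0)
            ≤ (if σ ≤ i then Bnorm γ (hist x (σ:ℤ)) * (Cs * r^(i-σ)) else 0) := by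
          intro i _
          by_cases h1 : σ + j ≤ i
          · rw [if_pos h1, if_pos (by omega)]
          · rw [if_neg h1]
            split_ifs
            · positivity
            · exact le_refl 0
        refine (Finset.sum_le_sum hle2).trans ?_
        have hext : ∑ i ∈ Finset.range n, (if σ ≤ i then Bnorm γ (hist x (σ:ℤ)) * (Cs * r^(i-σ)) else 0)
            ≤ ∑ i ∈ Finset.range (σ+n), (if σ ≤ i then Bnorm γ (hist x (σ:ℤ)) * (Cs * r^(i-σ)) else 0) := by
          refine Finset.sum_le_sum_of_subset_of_nonneg (Finset.range_subset_range.2 (by omega)) ?_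
          intro i _ _
          split_ifs
          · positivity
          · exact le_refl 0
        refine hext.trans ?_
        rw [← Finset.sum_filter]
        have hfil : (Finset.range (σ+n)).filter (fun i => σ ≤ i) = Finset.Ico σ (σ+n) := by
          ext i
          simp only [Finset.mem_filter, Finset.mem_range, Finset.mem_Ico]
          omega
        rw [hfil, Finset.sum_Ico_eq_sum_range]
        have hcanc : ∀ i : ℕ, σ + i - σ = i := fun i => by omega
        rw [Finset.sum_congr rfl (fun i _ => by rw [hcanc i]), Nat.add_sub_cancel_left]
        have hgeo : ∑ i ∈ Finset.range n, r^i ≤ (1-r)⁻¹ := by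
          have hsummable := summable_geometric_of_lt_one hr0 hr1
          have hts := Summable.sum_le_tsum (Finset.range n) (fun i _ => pow_nonneg hr0 i) hsummable
          rwa [tsum_geometric_of_lt_one hr0 hr1] at hts
        calc ∑ i ∈ Finset.range n, Bnorm γ (hist x (σ:ℤ)) * (Cs * r^i)
            = (Bnorm γ (hist x (σ:ℤ)) * Cs) * ∑ i ∈ Finset.range n, r^i := by
              rw [Finset.mul_sum]
              exact Finset.sum_congr rfl fun i _ => by ring
          _ ≤ Bnorm γ (hist x (σ:ℤ)) * Cs * (1-r)⁻¹ :=
              mul_le_mul_of_nonneg_left hgeo (mul_nonneg hBψ0 hCs0)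
      calc ‖x (n:ℤ)‖ ≤ M * ∑ i ∈ Finset.range n, ‖g i‖ := hMbd
        _ ≤ M * ((j:ℝ) * (Bnorm γ (hist x (σ:ℤ)) * A) + Bnorm γ (hist x (σ:ℤ)) * Cs * (1-r)⁻¹) := by
            refine mul_le_mul_of_nonneg_left ?_ hM0
            calc ∑ i ∈ Finset.range n, ‖g i‖
                ≤ ∑ i ∈ Finset.range n,
                  ((if σ ≤ i ∧ i < σ + j then Bnorm γ (hist x (σ:ℤ)) * A else 0)
                  + (if σ + j ≤ i then Bnorm γ (hist x (σ:ℤ)) * (Cs * r^(i-σ)) else 0)) :=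
                  Finset.sum_le_sum hgle
              _ = (∑ i ∈ Finset.range n, (if σ ≤ i ∧ i < σ + j then Bnorm γ (hist x (σ:ℤ)) * A else 0))
                  + ∑ i ∈ Finset.range n, (if σ + j ≤ i then Bnorm γ (hist x (σ:ℤ)) * (Cs * r^(i-σ)) else 0) :=
                  Finset.sum_add_distrib
              _ ≤ _ := add_le_add hsum1 hsum2
        _ = (M * S) * Bnorm γ (hist x (σ:ℤ)) := by rw [hSdef]; ring
        _ ≤ K2 * Bnorm γ (hist x (σ:ℤ)) :=
            mul_le_mul_of_nonneg_right (le_max_right _ _) hBψ0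
        _ ≤ K2 * ((1+D)^j * Bnorm γ φ) := mul_le_mul_of_nonneg_left hψbd hK2_0
        _ = K2 * (1+D)^j * Bnorm γ φ := by ring

end Sufficiency

/-- Theorem 4.4: for `γ > 0`, uniform stability in `B^γ`
(equivalently in `X` w.r.t. `B^γ`) ⟺ (`(ℓ^1,ℓ^∞)`-stability ∧ condition (★)). -/
theorem statement3 (γ : ℝ) (hγ : 0 < γ) (L : ℕ → ((ℕ → X) →ₗ[ℝ] X))
    (hL : ∀ n, OpBounded γ (L n)) :
    (USinB γ L ↔ USinX γ L) ∧
    (USinB γ L ↔ (lplqStable L 1 ∞ ∧ StarCond γ L)) := by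
  have hiff := usinB_iff_usinX (L := L) hγ
  refine ⟨hiff, ?_⟩
  constructor
  · intro hB
    have hX := hiff.1 hB
    exact ⟨usinX_imp_l1linf hX, usinX_imp_star hX⟩
  · rintro ⟨hl, hs⟩
    exact hiff.2 (sufficiency hγ hL hl hs)

end BP
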